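/- Let K ≥ 2 be an integer. Define the sequence A_{K−i}(K) for 0 ≤ i ≤ K−2 by the recursion A_{K−i}(K) = (i/((K−i)(2i+1)))·[(K−i−1)·A_{K−i+1}(K) + (K−i)/(K−i+1)] for 1 ≤ i ≤ K−2 with initial condition A_K(K) = 0. Then the closed-form A_{K−i}(K) = −i(i−1)/(2(4i²−1)(K−i)) + ∑_{ℓ=0}^{i−1} [(i−ℓ+1)(3ℓ²+ℓ−1)/(2(K−ℓ)(4ℓ²−1))]·∏_{j=ℓ+1}^{i} j/(2j+1) holds for all 0 ≤ i ≤ K−2. -/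

import Mathlib

/-!
Write `p(ℓ, i) = ∏_{j=ℓ+1}^{i} j/(2j+1)`, so that `p(ℓ, i+1) = p(ℓ, i) · (i+1)/(2i+3)`. Passing
from `i` to `i+1` in the closed form, the coefficient `(i-ℓ+1)/(K-ℓ)` of the `ℓ`-th summand becomes
`(K-i-2)/(K-i-1)` times the old one plus `1/(K-i-1)`: the factor `K-ℓ` cancels. Hence the sum
obeys the recursion up to the `K`-free sum `∑_{ℓ<i} q(ℓ) p(ℓ, i)`, with
`q(ℓ) = (3ℓ²+ℓ-1)/(2(4ℓ²-1))`, which equals `i(3i-2)/(2(4i²-1))`. What remains is an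
identity of rational functions in `i` and `K`.
-/

open Finset

noncomputable section

def ratioProd (l i : ℕ) : ℝ := ∏ j ∈ Icc (l + 1) i, (j : ℝ) / (2 * j + 1)

lemma ratioProd_self (i : ℕ) : ratioProd i i = 1 := by
  simp [ratioProd]

lemma ratioProd_succ {l i : ℕ} (h : l ≤ i) :
    ratioProd l (i + 1) = ratioProd l i * (((i : ℝ) + 1) / (2 * i + 3)) := by
  rw [ratioProd, ratioProd, prod_Icc_succ_top (by omega)]
  push_cast
  ring

lemma four_mul_sq_sub_one_ne_zero (l : ℕ) : 4 * (l : ℝ) ^ 2 - 1 ≠ 0 := by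
  rcases Nat.eq_zero_or_pos l with rfl | hl
  · norm_num
  · have : (1 : ℝ) ≤ l := by exact_mod_cast hl
    nlinarith

def shiftWeight (l : ℕ) : ℝ := (3 * (l : ℝ) ^ 2 + l - 1) / (2 * (4 * (l : ℝ) ^ 2 - 1))

lemma sum_shiftWeight_mul_ratioProd (n : ℕ) :
    ∑ l ∈ range n, shiftWeight l * ratioProd l n = n * (3 * n - 2) / (2 * (4 * (n : ℝ) ^ 2 - 1)) := by
  induction n with
  | zero => simp
  | succ n ih =>
    have hsucc : ∑ l ∈ range n, shiftWeight l * ratioProd l (n + 1)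
        = (∑ l ∈ range n, shiftWeight l * ratioProd l n) * (((n : ℝ) + 1) / (2 * n + 3)) := by
      rw [sum_mul]
      refine sum_congr rfl fun l hl => ?_
      rw [ratioProd_succ (mem_range.mp hl).le, mul_assoc]
    rw [sum_range_succ, hsucc, ih, ratioProd_succ le_rfl, ratioProd_self, shiftWeight]
    have h₁ : 2 * (4 * (n : ℝ) ^ 2 - 1) * (2 * n + 3) ≠ 0 := by
      have := four_mul_sq_sub_one_ne_zero n
      positivity
    have h₂ : 2 * (4 * ((n : ℝ) + 1) ^ 2 - 1) ≠ 0 := by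
      have := four_mul_sq_sub_one_ne_zero (n + 1)
      push_cast at this
      positivity
    push_cast
    rw [one_mul, ← add_mul, ← add_div, div_mul_div_comm, div_eq_div_iff h₁ h₂]
    ring

variable (K : ℝ)

def closedCoeff (i l : ℕ) : ℝ :=
  ((i : ℝ) - l + 1) * (3 * (l : ℝ) ^ 2 + l - 1) / (2 * (K - l) * (4 * (l : ℝ) ^ 2 - 1))

def closedSum (i : ℕ) : ℝ := ∑ l ∈ range i, closedCoeff K i l * ratioProd l i

def closedForm (i : ℕ) : ℝ :=
  -((i : ℝ) * ((i : ℝ) - 1)) / (2 * (4 * (i : ℝ) ^ 2 - 1) * (K - i)) + closedSum K i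

lemma closedCoeff_succ {n l : ℕ} (hl : K - l ≠ 0) (hn : K - n - 1 ≠ 0) :
    closedCoeff K (n + 1) l = (K - n - 2) / (K - n - 1) * closedCoeff K n l + shiftWeight l / (K - n - 1) := by
  rw [closedCoeff, closedCoeff, shiftWeight]
  push_cast
  field_simp
  ring

lemma closedSum_succ {n : ℕ} (hK : (n : ℝ) + 1 < K) :
    closedSum K (n + 1) = ((n : ℝ) + 1) / (2 * n + 3) *
      ((K - n - 2) / (K - n - 1) * closedSum K n
        + n * (3 * n - 2) / (2 * (4 * (n : ℝ) ^ 2 - 1)) / (K - n - 1) + closedCoeff K (n + 1) n) := by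
  have hn : K - n - 1 ≠ 0 := by linarith
  have hcoeff : ∑ l ∈ range n, closedCoeff K (n + 1) l * ratioProd l n
      = (K - n - 2) / (K - n - 1) * closedSum K n
        + n * (3 * n - 2) / (2 * (4 * (n : ℝ) ^ 2 - 1)) / (K - n - 1) := by
    rw [closedSum, ← sum_shiftWeight_mul_ratioProd, mul_sum, sum_div, ← sum_add_distrib]
    refine sum_congr rfl fun l hl => ?_
    have hlK : K - l ≠ 0 := by
      have : (l : ℝ) < n := by exact_mod_cast mem_range.mp hl
      linarith
    rw [closedCoeff_succ K hlK hn]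
    ring
  have hshift : closedSum K (n + 1)
      = ((n : ℝ) + 1) / (2 * n + 3) * ∑ l ∈ range (n + 1), closedCoeff K (n + 1) l * ratioProd l n := by
    rw [closedSum, mul_sum]
    refine sum_congr rfl fun l hl => ?_
    rw [ratioProd_succ (Nat.lt_succ_iff.mp (mem_range.mp hl))]
    ring
  rw [hshift, sum_range_succ, hcoeff, ratioProd_self, mul_one]

lemma closedForm_rec {i : ℕ} (hi : 1 ≤ i) (hK : (i : ℝ) < K) :
    closedForm K i = ((i : ℝ) / ((K - i) * (2 * (i : ℝ) + 1))) *
      ((K - i - 1) * closedForm K (i - 1) + (K - i) / (K - i + 1)) := by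
  obtain ⟨n, rfl⟩ := Nat.exists_eq_add_of_le' hi
  push_cast at hK ⊢
  rw [closedForm, closedForm, closedSum_succ K hK, closedCoeff]
  generalize closedSum K n = S
  have h₁ : K - n - 1 ≠ 0 := by linarith
  have h₂ : K - n ≠ 0 := by linarith
  push_cast
  rw [show K - (n + 1) = K - n - 1 by ring, show K - n - 1 + 1 = K - n by ring,
    show 4 * ((n : ℝ) + 1) ^ 2 - 1 = (2 * n + 1) * (2 * n + 3) by ring]
  -- as an atom, `4n² - 1` is recognised by `field_simp` as a nonzero denominator
  set d := 4 * (n : ℝ) ^ 2 - 1 with hd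
  have h₃ : d ≠ 0 := four_mul_sq_sub_one_ne_zero n
  field_simp
  rw [hd]
  ring

end

theorem stmt_11_general (K : ℕ) (A : ℕ → ℝ)
    (h0 : A 0 = 0)
    (hrec : ∀ i : ℕ, 1 ≤ i → i ≤ K - 2 →
      A i = ((i : ℝ) / (((K : ℝ) - i) * (2 * (i : ℝ) + 1))) *
        (((K : ℝ) - i - 1) * A (i - 1) + ((K : ℝ) - i) / ((K : ℝ) - i + 1))) :
    ∀ i : ℕ, i ≤ K - 2 →
      A i = -((i : ℝ) * ((i : ℝ) - 1)) / (2 * (4 * (i : ℝ) ^ 2 - 1) * ((K : ℝ) - i))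
        + ∑ ℓ ∈ Finset.range i,
            ((i : ℝ) - ℓ + 1) * (3 * (ℓ : ℝ) ^ 2 + ℓ - 1) /
              (2 * ((K : ℝ) - ℓ) * (4 * (ℓ : ℝ) ^ 2 - 1)) *
            ∏ j ∈ Finset.Icc (ℓ + 1) i, (j : ℝ) / (2 * j + 1) := by
  intro i hi
  change A i = closedForm K i
  induction i with
  | zero => simp [h0, closedForm, closedSum]
  | succ n ih =>
    have hK' : ((n + 1 : ℕ) : ℝ) < K := by exact_mod_cast (by omega : n + 1 < K)
    rw [hrec (n + 1) (by omega) hi, closedForm_rec K (by omega) hK', Nat.add_sub_cancel, ih (by omega)]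

/-- Closed form for the recursion `A_{K−i}(K)` in the IC analysis: if `A 0 = 0`
(`A i` stands for `A_{K−i}(K)`) and
`A i = (i/((K−i)(2i+1)))·[(K−i−1)·A (i−1) + (K−i)/(K−i+1)]` for `1 ≤ i ≤ K−2`, then
`A i = −i(i−1)/(2(4i²−1)(K−i)) + ∑_{ℓ=0}^{i−1} (i−ℓ+1)(3ℓ²+ℓ−1)/(2(K−ℓ)(4ℓ²−1)) · ∏_{j=ℓ+1}^{i} j/(2j+1)`
for all `0 ≤ i ≤ K−2`. -/
theorem stmt_11 (K : ℕ) (hK : 2 ≤ K) (A : ℕ → ℝ)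
    (h0 : A 0 = 0)
    (hrec : ∀ i : ℕ, 1 ≤ i → i ≤ K - 2 →
      A i = ((i : ℝ) / (((K : ℝ) - i) * (2 * (i : ℝ) + 1))) *
        (((K : ℝ) - i - 1) * A (i - 1) + ((K : ℝ) - i) / ((K : ℝ) - i + 1))) :
    ∀ i : ℕ, i ≤ K - 2 →
      A i = -((i : ℝ) * ((i : ℝ) - 1)) / (2 * (4 * (i : ℝ) ^ 2 - 1) * ((K : ℝ) - i))
        + ∑ ℓ ∈ Finset.range i,
            ((i : ℝ) - ℓ + 1) * (3 * (ℓ : ℝ) ^ 2 + ℓ - 1) /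
              (2 * ((K : ℝ) - ℓ) * (4 * (ℓ : ℝ) ^ 2 - 1)) *
            ∏ j ∈ Finset.Icc (ℓ + 1) i, (j : ℝ) / (2 * j + 1) :=
  stmt_11_general K A h0 hrec
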